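/- Let [b,e] be a (p-1)-segment of X^{p-1} and let Q^p[b..e] be the p-th symbols of the suffixes in that segment. Then the interval [b,e] decomposes in X^p into exactly n consecutive p-segments, where n = (number of distinct non-sentinel symbols occurring in Q^p[b..e]) + (number of sentinel symbols in Q^p[b..e]); the first #_$ of these p-segments (one per sentinel occurrence) have width 1, and for each distinct non-sentinel symbol c the corresponding p-segment has width equal to the number of occurrences of c in Q^p[b..e]. -/

import Mathlib

open scoped Classical

/-- Symbol type for suffixes: ranked sentinels (ordered by (suffix length, string index))
below all regular alphabet symbols. -/
abbrev SSym (A : Type*) := (ℕ ×ₗ ℕ) ⊕ₗ A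

variable {A : Type*} [LinearOrder A] {m k : ℕ}

/-- `symAt s (q, l) t` is the `t`-th symbol (0-indexed) of the `l`-suffix of the
string `s q` (a string of length `k`), padded beyond its end with its own ranked sentinel. -/
def symAt (s : Fin m → Fin k → A) (o : Fin m × Fin (k+1)) (t : ℕ) : SSym A :=
  if _h : t < (o.2 : ℕ) then
    toLex (Sum.inr (s o.1 ⟨k - (o.2 : ℕ) + t, by have := o.2.isLt; omega⟩))
  else
    toLex (Sum.inl (toLex ((o.2 : ℕ), (o.1 : ℕ))))

/-- The `p`-prefix of the suffix occurrence `o`. -/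
def pprefix (s : Fin m → Fin k → A) (p : ℕ) (o : Fin m × Fin (k+1)) : List (SSym A) :=
  List.ofFn fun t : Fin p => symAt s o t

/-- The full suffix string of occurrence `o` (its `l` symbols followed by its sentinel). -/
def suffStr (s : Fin m → Fin k → A) (o : Fin m × Fin (k+1)) : List (SSym A) :=
  List.ofFn fun t : Fin ((o.2 : ℕ) + 1) => symAt s o t

/-- The order `≺_p`: compare `p`-prefixes lexicographically, then suffix lengths,
then string indices. -/
def precP (s : Fin m → Fin k → A) (p : ℕ) (α β : Fin m × Fin (k+1)) : Prop :=
  List.Lex (· < ·) (pprefix s p α) (pprefix s p β) ∨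
    (pprefix s p α = pprefix s p β ∧
      ((α.2 : ℕ) < (β.2 : ℕ) ∨ ((α.2 : ℕ) = (β.2 : ℕ) ∧ (α.1 : ℕ) < (β.1 : ℕ))))

/-- Full lexicographic order on suffix occurrences, ties broken by length then string index. -/
def fullOrd (s : Fin m → Fin k → A) (α β : Fin m × Fin (k+1)) : Prop :=
  List.Lex (· < ·) (suffStr s α) (suffStr s β) ∨
    (suffStr s α = suffStr s β ∧
      ((α.2 : ℕ) < (β.2 : ℕ) ∨ ((α.2 : ℕ) = (β.2 : ℕ) ∧ (α.1 : ℕ) < (β.1 : ℕ))))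

/-- `[b,e]` is the `p`-segment of position `i` in the sorted array `X`:
a position `j` carries the same `p`-prefix as position `i` iff `b ≤ j ≤ e`. -/
def isSeg (s : Fin m → Fin k → A) (p : ℕ) {n : ℕ}
    (X : Fin n → Fin m × Fin (k+1)) (b e i : Fin n) : Prop :=
  b ≤ i ∧ i ≤ e ∧ ∀ j, (pprefix s p (X j) = pprefix s p (X i) ↔ b ≤ j ∧ j ≤ e)

/-- Position `i` is the start of its `p`-segment in the sorted array `X`. -/
def isStart (s : Fin m → Fin k → A) (p : ℕ) {n : ℕ}
    (X : Fin n → Fin m × Fin (k+1)) (i : Fin n) : Prop :=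
  ∀ j, j < i → pprefix s p (X j) ≠ pprefix s p (X i)

/-!
Both arrays list every suffix occurrence exactly once, and both are sorted by `(p-1)`-prefixes,
since `≺_p` refines the order of `(p-1)`-prefixes. Two sorted arrangements of the same multiset
coincide, so every position carries the same `(p-1)`-prefix `P` in `X^{p-1}` and in `X^p`; in
particular `[b,e]` is also the block of `P` in `X^p`. There the `p`-prefix is `P` followed by the
`p`-th symbol, which is therefore nondecreasing along `[b,e]`. So the `p`-segments inside `[b,e]`
are the maximal runs of equal `p`-th symbols: one per distinct symbol, of width its multiplicity.
A sentinel names its suffix occurrence, hence occurs once, and sentinels sort below all letters,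
hence come first.
-/

open Finset Function

namespace List

variable {α : Type*} [LinearOrder α]

theorem append_lt_append_of_lt_of_length_eq :
    ∀ {l₁ l₂ : List α}, l₁ < l₂ → l₁.length = l₂.length →
      ∀ t₁ t₂ : List α, l₁ ++ t₁ < l₂ ++ t₂
  | _, _, .nil, hlen => by simp at hlen
  | _, _, .cons h, hlen => fun t₁ t₂ =>
      .cons (append_lt_append_of_lt_of_length_eq h (by simpa using hlen) t₁ t₂)
  | _, _, .rel h, _ => fun _ _ => .rel h

theorem le_of_append_le_append_of_length_eq {l₁ l₂ t₁ t₂ : List α}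
    (hlen : l₁.length = l₂.length) (h : l₁ ++ t₁ ≤ l₂ ++ t₂) : l₁ ≤ l₂ :=
  not_lt.mp fun hlt => (append_lt_append_of_lt_of_length_eq hlt hlen.symm t₂ t₁).not_ge h

theorem le_of_append_singleton_le_append_singleton {l : List α} {a b : α}
    (h : l ++ [a] ≤ l ++ [b]) : a ≤ b :=
  not_lt.mp fun hlt => (append_left_lt (l₁ := l) (Lex.rel hlt : [b] < [a])).not_ge h

end List

theorem Sum.Lex.isLeft_of_le {α β : Type*} [LE α] [LE β] {x y : α ⊕ₗ β} (h : x ≤ y)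
    (hy : (ofLex y).isLeft) : (ofLex x).isLeft := by
  rw [Sum.Lex.le_def] at h
  generalize ofLex x = a, ofLex y = b at *
  cases h <;> simp_all

theorem Fin.mem_of_lt_add_card {N : ℕ} {T : Finset (Fin N)} {b i : Fin N}
    (hb : ∀ t ∈ T, b ≤ t) (hdown : ∀ t ∈ T, ∀ j, b ≤ j → j ≤ t → j ∈ T) (hbi : b ≤ i)
    (hi : (i : ℕ) < b + #T) : i ∈ T := by
  by_contra hiT
  have hsub : T ⊆ Ico b i := fun t ht =>
    mem_Ico.mpr ⟨hb t ht, lt_of_not_ge fun hit => hiT (hdown t ht i hbi hit)⟩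
  have := card_le_card hsub
  rw [Fin.card_Ico] at this
  omega

namespace Finset

variable {ι O β : Type*}

theorem card_filter_eq_card_image_of_forall_lt_ne [LinearOrder ι] [DecidableEq β]
    {I : Finset ι} {Q : ι → β} {P : ι → Prop} [DecidablePred P]
    (hP : ∀ i ∈ I, P i ↔ ∀ j ∈ I, j < i → Q j ≠ Q i) :
    #{i ∈ I | P i} = #(I.image Q) := by
  rw [← card_image_of_injOn (f := Q)]
  · congr 1
    refine Subset.antisymm (image_subset_image (filter_subset _ _)) ?_
    rintro _ hv
    obtain ⟨i, hi, rfl⟩ := mem_image.mp hv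
    have hfib : {j ∈ I | Q j = Q i}.Nonempty := ⟨i, mem_filter.mpr ⟨hi, rfl⟩⟩
    obtain ⟨hmin, hQmin⟩ := mem_filter.mp (min'_mem _ hfib)
    refine mem_image.mpr ⟨_, mem_filter.mpr ⟨hmin, (hP _ hmin).mpr fun j hj hlt heq => ?_⟩,
      hQmin⟩
    exact (min'_le _ j (mem_filter.mpr ⟨hj, heq.trans hQmin⟩)).not_gt hlt
  · intro i₁ hi₁ i₂ hi₂ heq
    obtain ⟨hI₁, hfirst₁⟩ := mem_filter.mp hi₁
    obtain ⟨hI₂, hfirst₂⟩ := mem_filter.mp hi₂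
    by_contra hne
    rcases lt_or_gt_of_ne hne with hlt | hlt
    · exact (hP i₂ hI₂).mp hfirst₂ i₁ hI₁ hlt heq
    · exact (hP i₁ hI₁).mp hfirst₁ i₂ hI₂ hlt heq.symm

theorem card_image_eq_card_filter_add_card_image_filter_not [DecidableEq β]
    (I : Finset ι) (Q : ι → β) (P : β → Prop) [DecidablePred P]
    (hinj : Set.InjOn Q (I.filter fun i => P (Q i) : Finset ι)) :
    #(I.image Q) = #{i ∈ I | P (Q i)} + #({i ∈ I | ¬ P (Q i)}.image Q) := by
  have hdisj : Disjoint ({i ∈ I | P (Q i)}.image Q) ({i ∈ I | ¬ P (Q i)}.image Q) := by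
    simp only [disjoint_left, mem_image, mem_filter]
    rintro _ ⟨i, ⟨-, hi⟩, rfl⟩ ⟨j, ⟨-, hj⟩, hji⟩
    exact hj (hji ▸ hi)
  rw [← filter_union_filter_not_eq (fun i => P (Q i)) I, image_union,
    card_union_of_disjoint hdisj, card_image_of_injOn hinj, filter_union_filter_not_eq]

theorem exists_filter_eq_eq_Icc_of_monotoneOn [LinearOrder ι] [LocallyFiniteOrder ι]
    [PartialOrder β] [DecidableEq β] {Q : ι → β} {b e : ι}
    (hQ : MonotoneOn Q (Set.Icc b e)) {c : β} (hc : ∃ j, b ≤ j ∧ j ≤ e ∧ Q j = c) :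
    ∃ b' e', b ≤ b' ∧ e' ≤ e ∧ b' ≤ e' ∧ {j ∈ Icc b e | Q j = c} = Icc b' e' := by
  obtain ⟨j, hbj, hje, hj⟩ := hc
  set F := {j ∈ Icc b e | Q j = c}
  have hF : F.Nonempty := ⟨j, mem_filter.mpr ⟨mem_Icc.mpr ⟨hbj, hje⟩, hj⟩⟩
  obtain ⟨hb'I, hb'c⟩ := mem_filter.mp (min'_mem F hF)
  obtain ⟨he'I, he'c⟩ := mem_filter.mp (max'_mem F hF)
  rw [mem_Icc] at hb'I he'I
  refine ⟨F.min' hF, F.max' hF, hb'I.1, he'I.2, min'_le_max' F hF, ?_⟩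
  ext i
  refine ⟨fun hi => mem_Icc.mpr ⟨min'_le F i hi, le_max' F i hi⟩, fun hi => ?_⟩
  obtain ⟨hb'i, hie'⟩ := mem_Icc.mp hi
  have hiI : i ∈ Set.Icc b e := ⟨hb'I.1.trans hb'i, hie'.trans he'I.2⟩
  have hlo := hQ hb'I hiI hb'i
  have hhi := hQ hiI he'I hie'
  rw [hb'c] at hlo
  rw [he'c] at hhi
  exact mem_filter.mpr ⟨mem_Icc.mpr hiI, le_antisymm hhi hlo⟩

theorem card_filter_comp_eq_of_image_eq [DecidableEq O] {X Y : ι → O}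
    (hX : Injective X) (hY : Injective Y) {I J : Finset ι} (h : I.image X = J.image Y)
    (P : O → Prop) [DecidablePred P] :
    #{i ∈ I | P (X i)} = #{j ∈ J | P (Y j)} := by
  rw [← card_image_of_injective _ hX, ← card_image_of_injective _ hY, ← filter_image,
    ← filter_image, h]

theorem image_filter_comp_eq_of_image_eq [DecidableEq O] [DecidableEq β] {X Y : ι → O}
    {I J : Finset ι} (h : I.image X = J.image Y) (P : O → Prop) [DecidablePred P]
    (g : O → β) :
    {i ∈ I | P (X i)}.image (fun i => g (X i)) =
      {j ∈ J | P (Y j)}.image (fun j => g (Y j)) := by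
  simpa only [filter_image, image_image, comp_def] using
    congrArg (fun S => (S.filter P).image g) h

end Finset

theorem comp_eq_comp_of_monotone_of_bijective {N : ℕ} {O β : Type*} [PartialOrder β]
    (F : O → β) {X Y : Fin N → O} (hX : Bijective X) (hY : Bijective Y)
    (hFX : Monotone (F ∘ X)) (hFY : Monotone (F ∘ Y)) : F ∘ X = F ∘ Y := by
  let τ : Equiv.Perm (Fin N) := (Equiv.ofBijective Y hY).trans (Equiv.ofBijective X hX).symm
  have hτ : X ∘ τ = Y := funext fun j => Equiv.ofBijective_apply_symm_apply X hX (Y j)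
  have := Tuple.unique_monotone (f := F ∘ X) (σ := 1) (τ := τ) hFX
    (by rwa [comp_assoc, hτ])
  simpa only [Equiv.Perm.coe_one, comp_id, comp_assoc, hτ] using this

section Prefixes

variable {s : Fin m → Fin k → A} {p : ℕ}

omit [LinearOrder A] in
theorem length_pprefix (s : Fin m → Fin k → A) (p : ℕ) (o : Fin m × Fin (k+1)) :
    (pprefix s p o).length = p := by
  simp [pprefix]

omit [LinearOrder A] in
theorem pprefix_succ (s : Fin m → Fin k → A) (p : ℕ) (o : Fin m × Fin (k+1)) :
    pprefix s (p+1) o = pprefix s p o ++ [symAt s o p] := by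
  simp only [pprefix, List.ofFn_succ', List.concat_eq_append, Fin.val_castSucc, Fin.val_last]

theorem pprefix_le_of_precP {α β : Fin m × Fin (k+1)} (h : precP s p α β) :
    pprefix s p α ≤ pprefix s p β := by
  rcases h with h | ⟨h, -⟩
  exacts [le_of_lt h, h.le]

theorem pprefix_le_of_pprefix_succ_le {α β : Fin m × Fin (k+1)}
    (h : pprefix s (p+1) α ≤ pprefix s (p+1) β) : pprefix s p α ≤ pprefix s p β := by
  rw [pprefix_succ, pprefix_succ] at h
  exact List.le_of_append_le_append_of_length_eq (by simp only [length_pprefix]) h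

theorem monotone_pprefix_comp {N : ℕ} {X : Fin N → Fin m × Fin (k+1)}
    (hX : ∀ i j, i < j → precP s p (X i) (X j)) : Monotone (pprefix s p ∘ X) := by
  intro i j hij
  rcases hij.eq_or_lt with rfl | hlt
  exacts [le_rfl, pprefix_le_of_precP (hX i j hlt)]

omit [LinearOrder A] in
theorem eq_of_symAt_eq_of_isLeft {t : ℕ} {α β : Fin m × Fin (k+1)}
    (h : symAt s α t = symAt s β t) (hl : (ofLex (symAt s α t)).isLeft) : α = β := by
  unfold symAt at h hl
  split_ifs at h hl
  · simp at hl
  · simp at hl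
  · exact absurd (toLex_inj.mp h) (by simp)
  · have h' := toLex_inj.mp (Sum.inl_injective (toLex_inj.mp h))
    exact Prod.ext (Fin.val_injective (congrArg Prod.snd h'))
      (Fin.val_injective (congrArg Prod.fst h'))

omit [LinearOrder A] in
theorem mem_image_Icc_iff_of_isSeg {N : ℕ} {X : Fin N → Fin m × Fin (k+1)}
    (hX : Surjective X) {b e i : Fin N} (hseg : isSeg s p X b e i) (o : Fin m × Fin (k+1)) :
    o ∈ (Icc b e).image X ↔ pprefix s p o = pprefix s p (X i) := by
  constructor
  · intro h
    obtain ⟨j, hj, rfl⟩ := mem_image.mp h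
    exact (hseg.2.2 j).mpr (mem_Icc.mp hj)
  · intro h
    obtain ⟨j, rfl⟩ := hX o
    exact mem_image_of_mem X (mem_Icc.mpr ((hseg.2.2 j).mp h))

end Prefixes

section Refinement

variable {s : Fin m → Fin k → A} {q N : ℕ} {X : Fin N → Fin m × Fin (k+1)} {b e : Fin N}

omit [LinearOrder A] in
theorem pprefix_succ_eq_iff_of_isSeg (hseg : isSeg s q X b e b) {i : Fin N}
    (hi : i ∈ Icc b e) (j : Fin N) :
    pprefix s (q+1) (X j) = pprefix s (q+1) (X i) ↔
      j ∈ Icc b e ∧ symAt s (X j) q = symAt s (X i) q := by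
  have hP : ∀ j, pprefix s q (X j) = pprefix s q (X i) ↔ j ∈ Icc b e := fun j => by
    rw [(hseg.2.2 i).mpr (mem_Icc.mp hi), hseg.2.2 j, mem_Icc]
  rw [pprefix_succ, pprefix_succ]
  constructor
  · intro h
    obtain ⟨hpre, hsym⟩ := List.append_inj h (by simp only [length_pprefix])
    exact ⟨(hP j).mp hpre, by simpa using hsym⟩
  · rintro ⟨hj, hsym⟩
    rw [(hP j).mpr hj, hsym]

theorem monotoneOn_symAt_of_isSeg (hseg : isSeg s q X b e b)
    (hmono : Monotone (pprefix s (q+1) ∘ X)) :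
    MonotoneOn (fun j => symAt s (X j) q) (Set.Icc b e) := by
  intro i hi j hj hij
  have h := hmono hij
  simp only [comp_apply, pprefix_succ, (hseg.2.2 i).mpr hi, (hseg.2.2 j).mpr hj] at h
  exact List.le_of_append_singleton_le_append_singleton h

theorem card_filter_isStart_of_isSeg (hX : Injective X) (hseg : isSeg s q X b e b) :
    #{i ∈ Icc b e | isStart s (q+1) X i} =
      #{j ∈ Icc b e | (ofLex (symAt s (X j) q)).isLeft} +
        #({j ∈ Icc b e | ¬ (ofLex (symAt s (X j) q)).isLeft}.image
          fun j => symAt s (X j) q) := by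
  rw [card_filter_eq_card_image_of_forall_lt_ne (P := isStart s (q+1) X)
    (Q := fun j => symAt s (X j) q)
    fun i hi => forall_congr' fun j => by
      simp only [ne_eq, pprefix_succ_eq_iff_of_isSeg hseg hi]
      tauto]
  rw [card_image_eq_card_filter_add_card_image_filter_not _ _ (fun v => (ofLex v).isLeft)]
  intro i hi j _ h
  exact hX (eq_of_symAt_eq_of_isLeft h (mem_filter.mp hi).2)

theorem isSeg_self_of_lt_add_card_isLeft (hX : Injective X) (hseg : isSeg s q X b e b)
    (hmono : Monotone (pprefix s (q+1) ∘ X)) {i : Fin N} (hbi : b ≤ i)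
    (hi : (i : ℕ) < b + #{j ∈ Icc b e | (ofLex (symAt s (X j) q)).isLeft}) :
    isSeg s (q+1) X i i i := by
  set T := {j ∈ Icc b e | (ofLex (symAt s (X j) q)).isLeft}
  have hdown : ∀ t ∈ T, ∀ j, b ≤ j → j ≤ t → j ∈ T := by
    intro t ht j hbj hjt
    obtain ⟨htI, htleft⟩ := mem_filter.mp ht
    have hjI : j ∈ Icc b e := mem_Icc.mpr ⟨hbj, hjt.trans (mem_Icc.mp htI).2⟩
    exact mem_filter.mpr ⟨hjI, Sum.Lex.isLeft_of_le
      (monotoneOn_symAt_of_isSeg hseg hmono (mem_Icc.mp hjI) (mem_Icc.mp htI) hjt) htleft⟩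
  obtain ⟨hiI, hleft⟩ := mem_filter.mp <|
    Fin.mem_of_lt_add_card (fun t ht => (mem_Icc.mp (mem_filter.mp ht).1).1) hdown hbi hi
  refine ⟨le_rfl, le_rfl, fun j => ?_⟩
  rw [pprefix_succ_eq_iff_of_isSeg hseg hiI]
  constructor
  · rintro ⟨-, h⟩
    have hji := hX (eq_of_symAt_eq_of_isLeft h (h ▸ hleft))
    exact ⟨hji.ge, hji.le⟩
  · rintro ⟨h1, h2⟩
    obtain rfl := le_antisymm h2 h1
    exact ⟨hiI, rfl⟩

theorem exists_isSeg_of_symAt_eq (hseg : isSeg s q X b e b)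
    (hmono : Monotone (pprefix s (q+1) ∘ X)) {c : SSym A}
    (hc : ∃ j, b ≤ j ∧ j ≤ e ∧ symAt s (X j) q = c) :
    ∃ b' e' : Fin N, b ≤ b' ∧ e' ≤ e ∧ isSeg s (q+1) X b' e' b' ∧
      (e' : ℕ) - b' + 1 = #{j ∈ Icc b e | symAt s (X j) q = c} ∧
      ∀ j, b' ≤ j → j ≤ e' → symAt s (X j) q = c := by
  obtain ⟨b', e', hbb', he'e, hb'e', hF⟩ :=
    exists_filter_eq_eq_Icc_of_monotoneOn (monotoneOn_symAt_of_isSeg hseg hmono) hc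
  have hmemF : ∀ j, j ∈ Icc b e ∧ symAt s (X j) q = c ↔ b' ≤ j ∧ j ≤ e' := fun j => by
    rw [← Finset.mem_Icc, ← hF, mem_filter]
  have hb' := (hmemF b').mpr ⟨le_rfl, hb'e'⟩
  refine ⟨b', e', hbb', he'e, ⟨le_rfl, hb'e', fun j => ?_⟩, ?_,
    fun j h1 h2 => ((hmemF j).mpr ⟨h1, h2⟩).2⟩
  · rw [pprefix_succ_eq_iff_of_isSeg hseg hb'.1, hb'.2, hmemF]
  · rw [hF, Fin.card_Icc]
    omega

end Refinement

/-- Let `[b,e]` be a `(p-1)`-segment of `X^{p-1}` and let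
`Q j = symAt s (Xprev j) (p-1)` be the `p`-th symbol of the suffix at position `j`
(a sentinel — a `Sum.inl` value — iff the suffix is shorter than `p`).  Then in `X^p` the
interval `[b,e]` decomposes into exactly `n` consecutive `p`-segments, where
`n = #{sentinel positions in Q[b..e]} + #{distinct non-sentinel symbols in Q[b..e]}`
(counted below as the number of segment start positions in `[b,e]`); the sentinel
positions give the first `#$` segments, each of width `1`; and for each distinct
non-sentinel symbol `c` the corresponding `p`-segment has width equal to the number of
occurrences of `c` in `Q[b..e]`. -/
theorem segment_decomposition (s : Fin m → Fin k → A) (p : ℕ) (hp : 1 ≤ p)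
    (Xprev Xcur : Fin ((k + 1) * m) → Fin m × Fin (k + 1))
    (hbij1 : Function.Bijective Xprev)
    (hsort1 : ∀ i j, i < j → precP s (p - 1) (Xprev i) (Xprev j))
    (hbij2 : Function.Bijective Xcur)
    (hsort2 : ∀ i j, i < j → precP s p (Xcur i) (Xcur j))
    (b e : Fin ((k + 1) * m)) (hseg : isSeg s (p - 1) Xprev b e b) :
    (((Finset.Icc b e).filter (fun i => isStart s p Xcur i)).card =
        ((Finset.Icc b e).filter
            (fun j => (ofLex (symAt s (Xprev j) (p - 1))).isLeft)).card +
          (((Finset.Icc b e).filter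
              (fun j => ¬ (ofLex (symAt s (Xprev j) (p - 1))).isLeft)).image
            (fun j => symAt s (Xprev j) (p - 1))).card) ∧
    (∀ i : Fin ((k + 1) * m), b ≤ i →
      (i : ℕ) < (b : ℕ) +
        ((Finset.Icc b e).filter
          (fun j => (ofLex (symAt s (Xprev j) (p - 1))).isLeft)).card →
      isSeg s p Xcur i i i) ∧
    (∀ c : SSym A, ¬ (ofLex c).isLeft →
      (∃ j, b ≤ j ∧ j ≤ e ∧ symAt s (Xprev j) (p - 1) = c) →
      ∃ b' e' : Fin ((k + 1) * m), b ≤ b' ∧ e' ≤ e ∧ isSeg s p Xcur b' e' b' ∧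
        (e' : ℕ) - (b' : ℕ) + 1 =
          ((Finset.Icc b e).filter (fun j => symAt s (Xprev j) (p - 1) = c)).card ∧
        (∀ j, b' ≤ j → j ≤ e' → symAt s (Xcur j) (p - 1) = c)) := by
  obtain ⟨q, rfl⟩ : ∃ q, p = q + 1 := ⟨p - 1, by omega⟩
  simp only [Nat.add_sub_cancel] at hsort1 hseg ⊢
  have hmono := monotone_pprefix_comp hsort2
  have hcomp : ∀ j, pprefix s q (Xprev j) = pprefix s q (Xcur j) :=
    congrFun (comp_eq_comp_of_monotone_of_bijective (pprefix s q) hbij1 hbij2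
      (monotone_pprefix_comp hsort1) fun _ _ hij => pprefix_le_of_pprefix_succ_le (hmono hij))
  have hseg' : isSeg s q Xcur b e b := by simpa only [isSeg, hcomp] using hseg
  have himage : (Icc b e).image Xprev = (Icc b e).image Xcur := by
    ext o
    rw [mem_image_Icc_iff_of_isSeg hbij1.2 hseg, mem_image_Icc_iff_of_isSeg hbij2.2 hseg',
      hcomp]
  have hcard := card_filter_comp_eq_of_image_eq hbij1.1 hbij2.1 himage
  rw [hcard (fun o => (ofLex (symAt s o q)).isLeft), image_filter_comp_eq_of_image_eq himage
    (fun o => ¬ (ofLex (symAt s o q)).isLeft) (fun o => symAt s o q)]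
  refine ⟨card_filter_isStart_of_isSeg hbij2.1 hseg',
    fun i => isSeg_self_of_lt_add_card_isLeft hbij2.1 hseg' hmono, fun c _ hc => ?_⟩
  obtain ⟨j, hbj, hje, rfl⟩ := hc
  obtain ⟨j', hj', hXj'⟩ :=
    mem_image.mp (himage ▸ mem_image_of_mem Xprev (mem_Icc.mpr ⟨hbj, hje⟩))
  rw [hcard fun o => symAt s o q = symAt s (Xprev j) q]
  exact exists_isSeg_of_symAt_eq hseg' hmono
    ⟨j', (mem_Icc.mp hj').1, (mem_Icc.mp hj').2, by rw [hXj']⟩
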